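/- arXiv:2111.01854 — 4 statements merged into one kernel-verified Lean document; each statement's English description precedes it below -/
import Mathlib

section
/- (Light-cone form of the Lieb-Robinson bound.) Suppose A is localized on a nonempty subset X ⊆ Λ, B is localized on a nonempty subset Y ⊆ Λ, [A,B] = 0, [h_Z, h_W] = 0 for all disjoint Z, W ⊆ Λ, and dist(X,Y) > 0. Define the Lieb-Robinson velocity v_LR = 4s/μ. Then for every t ∈ ℝ with dist(X,Y) ≥ v_LR·|t|, ‖[A(t), B]‖ ≤ 2·|X|·‖A‖·‖B‖·exp(−(μ/2)·dist(X,Y)). -/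
open scoped Matrix Classical

/-- The L2 operator norm of an `n × n` complex matrix. -/
noncomputable def opNorm {n : ℕ} (A : Matrix (Fin n) (Fin n) ℂ) : ℝ :=
  ‖Matrix.toEuclideanCLM (𝕜 := ℂ) A‖

/-- Heisenberg time evolution `A(t) = e^{itH} A e^{-itH}`. -/
noncomputable def timeEvol {n : ℕ} (H A : Matrix (Fin n) (Fin n) ℂ) (t : ℝ) :
    Matrix (Fin n) (Fin n) ℂ :=
  NormedSpace.exp ((Complex.I * (t : ℂ)) • H) * A *
    NormedSpace.exp ((-(Complex.I * (t : ℂ))) • H)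

/-- `A` is localized on `X ⊆ Λ`: it commutes with every `h_Z` with `Z ∩ X = ∅`. -/
def IsLocalized {n : ℕ} {Λ : Type} [Fintype Λ] [DecidableEq Λ]
    (h : Finset Λ → Matrix (Fin n) (Fin n) ℂ)
    (A : Matrix (Fin n) (Fin n) ℂ) (X : Finset Λ) : Prop :=
  ∀ Z : Finset Λ, Z ∩ X = ∅ → A * h Z = h Z * A

/-- `dist(X,Y) = min_{i∈X, j∈Y} dist(i,j)` (as an infimum, which is a minimum for
nonempty finite sets). -/
noncomputable def setDist {Λ : Type} [MetricSpace Λ] (X Y : Finset Λ) : ℝ :=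
  sInf {d : ℝ | ∃ i ∈ X, ∃ j ∈ Y, d = dist i j}

/-!
Write `c(t) = e^{itH} c e^{-itH}`. If `c` commutes with every `h_Z` not meeting `S`, split
`H = H_S + L` with `H_S = ∑_{Z ∩ S ≠ ∅} h_Z` and `[c, L] = 0`. In the interaction picture
`W(t) = e^{itH} e^{-itL}` the commutator `[c(t), b]` only moves through `H_S`, which gives the
Duhamel bound `‖[c(t), b]‖ ≤ ‖[c, b]‖ + 2‖c‖ ∫₀ᵗ ‖[H_S(τ), b]‖ dτ`. Applying the same bound to
each `h_Z` in `H_S` and iterating `m` times, the decay hypothesis turns the sum over `Z` back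
into a sum over sites, and yields
`‖[c(t), b]‖ ≤ 2‖c‖‖b‖ ∑_{i ∈ S} (e^{-μ d(i,Y)} ∑_{j<m} (2st)^j/j! + (2st)^m/m!)`.
Letting `m → ∞` gives `2‖c‖‖b‖ ∑_{i ∈ S} e^{-μ d(i,Y) + 2s|t|}`, and inside the light cone
`4s|t| ≤ μ d(X,Y)` the exponent is at most `-(μ/2) d(X,Y)`.
-/

open NormedSpace
open Complex (I)

lemma Ring.norm_lie_le {A : Type*} [NormedRing A] (x y : A) : ‖⁅x, y⁆‖ ≤ 2 * ‖x‖ * ‖y‖ := by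
  rw [Ring.lie_def]
  calc ‖x * y - y * x‖ ≤ ‖x‖ * ‖y‖ + ‖y‖ * ‖x‖ :=
        (norm_sub_le _ _).trans (add_le_add (norm_mul_le _ _) (norm_mul_le _ _))
    _ = 2 * ‖x‖ * ‖y‖ := by ring

lemma Ring.sum_lie {ι A : Type*} [Ring A] (s : Finset ι) (f : ι → A) (b : A) :
    ⁅∑ i ∈ s, f i, b⁆ = ∑ i ∈ s, ⁅f i, b⁆ := by
  simp only [Ring.lie_def, Finset.sum_mul, Finset.mul_sum, Finset.sum_sub_distrib]

section Evolution

variable {A : Type*} [NormedRing A] [NormedAlgebra ℂ A] {H : A}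

noncomputable def evolve (H : A) (t : ℝ) (x : A) : A :=
  exp ((I * t) • H) * x * exp (-(I * t) • H)

lemma evolve_zero (H x : A) : evolve H 0 x = x := by simp [evolve]

lemma evolve_neg_neg (H : A) (t : ℝ) (x : A) : evolve (-H) (-t) x = evolve H t x := by
  simp only [evolve, Complex.ofReal_neg, mul_neg, neg_smul, smul_neg, neg_neg]

lemma evolve_sum {ι : Type*} (s : Finset ι) (f : ι → A) (t : ℝ) :
    evolve H t (∑ i ∈ s, f i) = ∑ i ∈ s, evolve H t (f i) := by
  simp only [evolve, Finset.mul_sum, Finset.sum_mul]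

lemma hasDerivAt_exp_I_mul_smul [CompleteSpace A] (H : A) (t : ℝ) :
    HasDerivAt (fun τ : ℝ => exp ((I * τ) • H)) (exp ((I * t) • H) * (I • H)) t := by
  have hsmul : ∀ τ : ℝ, (I * τ) • H = τ • (I • H) := fun τ => by
    rw [mul_comm, mul_smul, Complex.coe_smul]
  simp only [hsmul]
  exact hasDerivAt_exp_smul_const (I • H) t

lemma hasDerivAt_evolve [CompleteSpace A] (H x : A) (t : ℝ) :
    HasDerivAt (fun τ => evolve H τ x) (I • ⁅H, evolve H t x⁆) t := by
  have hE : Commute (exp ((I * t) • H)) (I • H) :=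
    (((Commute.refl H).smul_left _).smul_right _).exp_left
  have hneg : ∀ τ : ℝ, -(I * τ) • H = (I * τ) • -H := fun τ => by rw [neg_smul, smul_neg]
  have h' := hasDerivAt_exp_I_mul_smul (-H) t
  simp only [← hneg] at h'
  refine (((hasDerivAt_exp_I_mul_smul H t).mul_const x).mul h').congr_deriv ?_
  rw [hE.eq, smul_neg, mul_neg, Ring.lie_def, evolve]
  simp only [mul_neg, mul_smul_comm, smul_mul_assoc, smul_sub, mul_assoc]
  abel

@[fun_prop]
lemma continuous_evolve [CompleteSpace A] (H x : A) : Continuous fun τ => evolve H τ x :=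
  continuous_iff_continuousAt.2 fun τ => (hasDerivAt_evolve H x τ).continuousAt

variable [StarRing A] [CStarRing A] [StarModule ℂ A]

lemma star_exp_I_mul_smul (hH : IsSelfAdjoint H) (t : ℝ) :
    star (exp ((I * t) • H)) = exp (-(I * t) • H) := by
  rw [star_exp, star_smul, hH.star_eq]
  simp

lemma evolve_eq_mul_star (hH : IsSelfAdjoint H) (t : ℝ) (x : A) :
    evolve H t x = exp ((I * t) • H) * x * star (exp ((I * t) • H)) := by
  rw [evolve, star_exp_I_mul_smul hH]

lemma star_evolve (hH : IsSelfAdjoint H) (t : ℝ) (x : A) :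
    star (evolve H t x) = evolve H t (star x) := by
  simp only [evolve_eq_mul_star hH, star_mul, star_star, mul_assoc]

lemma IsSelfAdjoint.evolve {x : A} (hx : IsSelfAdjoint x) (hH : IsSelfAdjoint H) (t : ℝ) :
    IsSelfAdjoint (evolve H t x) := by
  rw [IsSelfAdjoint, star_evolve hH, hx.star_eq]

variable [CompleteSpace A]

lemma exp_I_mul_smul_mem_unitary (hH : IsSelfAdjoint H) (t : ℝ) :
    exp ((I * t) • H) ∈ unitary A := by
  let +nondep : NormedAlgebra ℚ A := .restrictScalars ℚ ℂ A
  refine exp_mem_unitary_of_mem_skewAdjoint (hH.smul_mem_skewAdjoint ?_)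
  simp [skewAdjoint.mem_iff]

lemma norm_evolve (hH : IsSelfAdjoint H) (t : ℝ) (x : A) : ‖evolve H t x‖ = ‖x‖ := by
  rw [evolve_eq_mul_star hH,
    CStarRing.norm_mul_mem_unitary _ (Unitary.star_mem (exp_I_mul_smul_mem_unitary hH t)),
    CStarRing.norm_mem_unitary_mul _ (exp_I_mul_smul_mem_unitary hH t)]

lemma evolve_mul (hH : IsSelfAdjoint H) (t : ℝ) (x y : A) :
    evolve H t (x * y) = evolve H t x * evolve H t y := by
  have hU := Unitary.star_mul_self_of_mem (exp_I_mul_smul_mem_unitary hH t)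
  simp only [evolve_eq_mul_star hH, mul_assoc]
  rw [← mul_assoc (star _) (exp _), hU, one_mul]

lemma evolve_lie (hH : IsSelfAdjoint H) (t : ℝ) (x y : A) :
    evolve H t ⁅x, y⁆ = ⁅evolve H t x, evolve H t y⁆ := by
  simp only [Ring.lie_def, ← evolve_mul hH]
  simp only [evolve, mul_sub, sub_mul]

lemma evolve_self (hH : IsSelfAdjoint H) (t : ℝ) : evolve H t H = H := by
  have hU := Unitary.mul_star_self_of_mem (exp_I_mul_smul_mem_unitary hH t)
  rw [evolve_eq_mul_star hH, ← ((Commute.refl H).smul_right (I * t)).exp_right.eq, mul_assoc, hU,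
    mul_one]

end Evolution

section Duhamel

variable {A : Type*} [NormedRing A] [NormedAlgebra ℂ A] [StarRing A] [CStarRing A]
  [StarModule ℂ A] [CompleteSpace A]

theorem norm_le_add_integral_of_hasDerivAt_lie {F G P W : ℝ → A} {t : ℝ} (ht : 0 ≤ t)
    (hW : ∀ τ, W τ ∈ unitary A) (hP : ∀ τ, star (P τ) = -P τ)
    (hWd : ∀ τ, HasDerivAt W (P τ * W τ) τ) (hFd : ∀ τ, HasDerivAt F (⁅P τ, F τ⁆ + G τ) τ)
    (hG : Continuous G) :
    ‖F t‖ ≤ ‖F 0‖ + ∫ τ in (0 : ℝ)..t, ‖G τ‖ := by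
  have hconj : ∀ τ x, ‖star (W τ) * x * W τ‖ = ‖x‖ := fun τ x => by
    rw [CStarRing.norm_mul_mem_unitary _ (hW τ),
      CStarRing.norm_mem_unitary_mul _ (Unitary.star_mem (hW τ))]
  -- In the interaction picture `W⋆ F W` the rotation term `⁅P, F⁆` drops out.
  have hgd : ∀ τ, HasDerivAt (fun τ => star (W τ) * F τ * W τ)
      (star (W τ) * G τ * W τ) τ := fun τ => by
    refine ((((hWd τ).star).mul (hFd τ)).mul (hWd τ)).congr_deriv ?_
    rw [Pi.mul_apply, star_mul, hP, Ring.lie_def]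
    noncomm_ring
  have hWc : Continuous W := continuous_iff_continuousAt.2 fun τ => (hWd τ).continuousAt
  have hFTC := intervalIntegral.integral_eq_sub_of_hasDerivAt (fun τ _ => hgd τ)
    (((hWc.star.mul hG).mul hWc).intervalIntegrable 0 t)
  calc ‖F t‖
      = ‖star (W 0) * F 0 * W 0 + (star (W t) * F t * W t - star (W 0) * F 0 * W 0)‖ := by
        rw [add_sub_cancel, hconj]
    _ ≤ ‖F 0‖ + ∫ τ in (0 : ℝ)..t, ‖star (W τ) * G τ * W τ‖ := by
        rw [← hFTC, ← hconj 0 (F 0)]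
        refine (norm_add_le _ _).trans ?_
        gcongr
        exact intervalIntegral.norm_integral_le_integral_norm ht
    _ = ‖F 0‖ + ∫ τ in (0 : ℝ)..t, ‖G τ‖ := by simp only [hconj]

variable {H L : A}

lemma hasDerivAt_exp_I_mul_smul_mul_exp (hH : IsSelfAdjoint H) (L : A) (t : ℝ) :
    HasDerivAt (fun τ : ℝ => exp ((I * τ) • H) * exp (-(I * τ) • L))
      (I • evolve H t (H - L) * (exp ((I * t) • H) * exp (-(I * t) • L))) t := by
  have hneg : ∀ τ : ℝ, -(I * τ) • L = (I * τ) • -L := fun τ => by rw [neg_smul, smul_neg]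
  have h' := hasDerivAt_exp_I_mul_smul (-L) t
  simp only [← hneg] at h'
  refine ((hasDerivAt_exp_I_mul_smul H t).mul h').congr_deriv ?_
  have hU := Unitary.star_mul_self_of_mem (exp_I_mul_smul_mem_unitary hH t)
  have hL : Commute (exp (-(I * t) • L)) L :=
    ((Commute.refl L).smul_left _).exp_left
  rw [evolve_eq_mul_star hH, smul_mul_assoc, mul_assoc (exp _ * (H - L)), ← mul_assoc (star _),
    hU, one_mul, mul_sub, sub_mul, mul_assoc (exp ((I * t) • H)) L, ← hL.eq]
  simp only [smul_neg, mul_neg, mul_smul_comm, smul_mul_assoc, smul_sub, mul_assoc]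
  abel

lemma hasDerivAt_lie_evolve (hH : IsSelfAdjoint H) {c : A} (hcL : Commute c L) (b : A)
    (t : ℝ) :
    HasDerivAt (fun τ => ⁅evolve H τ c, b⁆)
      (⁅I • evolve H t (H - L), ⁅evolve H t c, b⁆⁆ +
        I • ⁅⁅evolve H t (H - L), b⁆, evolve H t c⁆) t := by
  have hd := hasDerivAt_evolve H c t
  have hlie : HasDerivAt (fun τ => ⁅evolve H τ c, b⁆) ⁅I • ⁅H, evolve H t c⁆, b⁆ t := by
    simp only [Ring.lie_def]
    exact (hd.mul_const b).sub (hd.const_mul b)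
  refine hlie.congr_deriv ?_
  have hHc : ⁅H, evolve H t c⁆ = ⁅evolve H t (H - L), evolve H t c⁆ := by
    nth_rewrite 1 [← evolve_self hH t]
    rw [← evolve_lie hH, ← evolve_lie hH, Ring.lie_def, Ring.lie_def, sub_mul, mul_sub,
      hcL.eq, sub_sub_sub_cancel_right]
  rw [hHc]
  simp only [Ring.lie_def, smul_mul_assoc, mul_smul_comm, mul_sub, sub_mul, smul_sub, mul_assoc]
  abel

theorem norm_lie_evolve_le_add_integral (hH : IsSelfAdjoint H) (hL : IsSelfAdjoint L) {c : A}
    (hcL : Commute c L) (b : A) {t : ℝ} (ht : 0 ≤ t) :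
    ‖⁅evolve H t c, b⁆‖ ≤
      ‖⁅c, b⁆‖ + 2 * ‖c‖ * ∫ τ in (0 : ℝ)..t, ‖⁅evolve H τ (H - L), b⁆‖ := by
  have hW : ∀ τ : ℝ, exp ((I * τ) • H) * exp (-(I * τ) • L) ∈ unitary A := fun τ =>
    mul_mem (exp_I_mul_smul_mem_unitary hH τ)
      (star_exp_I_mul_smul hL τ ▸ Unitary.star_mem (exp_I_mul_smul_mem_unitary hL τ))
  have hP : ∀ τ : ℝ, star (I • evolve H τ (H - L)) = -(I • evolve H τ (H - L)) := fun τ => by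
    rw [star_smul, ((hH.sub hL).evolve hH τ).star_eq]
    simp
  have hG : Continuous fun τ => I • ⁅⁅evolve H τ (H - L), b⁆, evolve H τ c⁆ := by
    simp only [Ring.lie_def]
    fun_prop
  refine (norm_le_add_integral_of_hasDerivAt_lie ht hW hP
    (hasDerivAt_exp_I_mul_smul_mul_exp hH L) (hasDerivAt_lie_evolve hH hcL b) hG).trans ?_
  rw [evolve_zero, ← intervalIntegral.integral_const_mul]
  gcongr
  refine intervalIntegral.integral_mono_on ht ?_ ?_ fun τ _ => ?_
  · exact hG.norm.intervalIntegrable 0 t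
  · exact (continuous_const.mul (by simp only [Ring.lie_def]; fun_prop)).intervalIntegrable 0 t
  · rw [norm_smul, Complex.norm_I, one_mul, ← norm_evolve hH τ c]
    linarith [Ring.norm_lie_le ⁅evolve H τ (H - L), b⁆ (evolve H τ c)]

end Duhamel

/-- The `m`-th iterate of the Duhamel bound; in closed form
`lrBound s a m t = a ∑_{j<m} (2st)^j/j! + (2st)^m/m!`. -/
noncomputable def lrBound (s a : ℝ) : ℕ → ℝ → ℝ
  | 0, _ => 1
  | m + 1, t => a + 2 * s * ∫ τ in (0 : ℝ)..t, lrBound s a m τ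

section lrBound

variable {s a : ℝ}

lemma continuous_lrBound (s a : ℝ) : ∀ m, Continuous (lrBound s a m)
  | 0 => continuous_const
  | m + 1 => continuous_const.add <| continuous_const.mul <|
      intervalIntegral.continuous_primitive
        (fun _ _ => (continuous_lrBound s a m).intervalIntegrable _ _) 0

lemma lrBound_nonneg (hs : 0 ≤ s) (ha : 0 ≤ a) : ∀ m {t : ℝ}, 0 ≤ t → 0 ≤ lrBound s a m t
  | 0, _, _ => zero_le_one
  | m + 1, t, ht => by
    have : 0 ≤ ∫ τ in (0 : ℝ)..t, lrBound s a m τ :=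
      intervalIntegral.integral_nonneg ht fun τ hτ => lrBound_nonneg hs ha m hτ.1
    simp only [lrBound]
    positivity

lemma lrBound_le_mul (hs : 0 ≤ s) {a' w : ℝ} (hw : 1 ≤ w) (ha : a' ≤ w * a) :
    ∀ m {t : ℝ}, 0 ≤ t → lrBound s a' m t ≤ w * lrBound s a m t
  | 0, _, _ => by simpa [lrBound] using hw
  | m + 1, t, ht => by
    have hint : ∫ τ in (0 : ℝ)..t, lrBound s a' m τ ≤ ∫ τ in (0 : ℝ)..t, w * lrBound s a m τ :=
      intervalIntegral.integral_mono_on ht ((continuous_lrBound s a' m).intervalIntegrable _ _)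
        ((continuous_const.mul (continuous_lrBound s a m)).intervalIntegrable _ _)
        fun τ hτ => lrBound_le_mul hs hw ha m hτ.1
    rw [intervalIntegral.integral_const_mul] at hint
    simp only [lrBound]
    nlinarith

lemma integral_exp_add_pow_div_factorial (s a : ℝ) (m : ℕ) (t : ℝ) :
    2 * s * ∫ τ in (0 : ℝ)..t, (a * Real.exp (2 * s * τ) + (2 * s * τ) ^ m / m.factorial) =
      a * Real.exp (2 * s * t) + (2 * s * t) ^ (m + 1) / (m + 1).factorial - a := by
  have hderiv : ∀ τ : ℝ, HasDerivAt
      (fun τ => a * Real.exp (2 * s * τ) + (2 * s * τ) ^ (m + 1) / (m + 1).factorial)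
      (2 * s * (a * Real.exp (2 * s * τ) + (2 * s * τ) ^ m / m.factorial)) τ := fun τ => by
    have hlin : HasDerivAt (fun τ : ℝ => 2 * s * τ) (2 * s) τ := by
      simpa using (hasDerivAt_id τ).const_mul (2 * s)
    refine ((hlin.exp.const_mul a).add ((hlin.pow (m + 1)).div_const _)).congr_deriv ?_
    rw [Nat.factorial_succ]
    push_cast
    field_simp
  rw [← intervalIntegral.integral_const_mul, intervalIntegral.integral_eq_sub_of_hasDerivAt
    (fun τ _ => hderiv τ) ((by fun_prop : Continuous _).intervalIntegrable _ _)]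
  simp

lemma lrBound_le_exp_add_pow (hs : 0 ≤ s) (ha : 0 ≤ a) :
    ∀ m {t : ℝ}, 0 ≤ t →
      lrBound s a m t ≤ a * Real.exp (2 * s * t) + (2 * s * t) ^ m / m.factorial
  | 0, t, _ => by
    simp only [lrBound, pow_zero, Nat.factorial_zero, Nat.cast_one, div_one]
    exact le_add_of_nonneg_left (by positivity)
  | m + 1, t, ht => by
    have hint : ∫ τ in (0 : ℝ)..t, lrBound s a m τ ≤
        ∫ τ in (0 : ℝ)..t, (a * Real.exp (2 * s * τ) + (2 * s * τ) ^ m / m.factorial) :=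
      intervalIntegral.integral_mono_on ht ((continuous_lrBound s a m).intervalIntegrable _ _)
        ((by fun_prop : Continuous _).intervalIntegrable _ _)
        fun τ hτ => lrBound_le_exp_add_pow hs ha m hτ.1
    have := integral_exp_add_pow_div_factorial s a m t
    simp only [lrBound]
    nlinarith

end lrBound

section Combinatorics

open Finset

variable {Λ : Type*} [Fintype Λ] [DecidableEq Λ]

lemma sum_filter_inter_nonempty_le (S : Finset Λ) {v : Finset Λ → ℝ} (hv : ∀ Z, 0 ≤ v Z) :
    ∑ Z with (Z ∩ S).Nonempty, v Z ≤ ∑ i ∈ S, ∑ Z with i ∈ Z, v Z := by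
  have hswap : ∑ i ∈ S, ∑ Z with i ∈ Z, v Z = ∑ Z, #(Z ∩ S) * v Z := by
    simp only [← nsmul_eq_mul, ← sum_const]
    exact sum_comm' fun i Z => by simp [and_comm]
  rw [hswap, ← sum_filter_add_sum_filter_not univ (fun Z => (Z ∩ S).Nonempty)]
  refine le_add_of_le_of_nonneg (sum_le_sum fun Z hZ => ?_)
    (sum_nonneg fun Z _ => mul_nonneg (Nat.cast_nonneg _) (hv Z))
  have h1 : (1 : ℝ) ≤ #(Z ∩ S) := by exact_mod_cast card_pos.2 (mem_filter.1 hZ).2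
  nlinarith [hv Z]

lemma sum_filter_inter_nonempty_mul_sum_le (S : Finset Λ) {w ω : Finset Λ → ℝ} {f : Λ → ℝ}
    {s : ℝ} (hw : ∀ Z, 0 ≤ w Z) (hf : ∀ i, 0 ≤ f i)
    (hfω : ∀ Z, ∀ i ∈ Z, ∀ j ∈ Z, f j ≤ ω Z * f i)
    (hs : ∀ i, ∑ Z with i ∈ Z, w Z * #Z * ω Z ≤ s) :
    ∑ Z with (Z ∩ S).Nonempty, w Z * ∑ j ∈ Z, f j ≤ s * ∑ i ∈ S, f i := by
  refine (sum_filter_inter_nonempty_le S fun Z =>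
    mul_nonneg (hw Z) (sum_nonneg fun j _ => hf j)).trans ?_
  rw [mul_sum]
  refine sum_le_sum fun i _ => ?_
  calc ∑ Z with i ∈ Z, w Z * ∑ j ∈ Z, f j
      ≤ ∑ Z with i ∈ Z, w Z * #Z * ω Z * f i := sum_le_sum fun Z hZ => by
        have hsum := sum_le_card_nsmul Z f (ω Z * f i) (hfω Z i (mem_filter.1 hZ).2)
        rw [nsmul_eq_mul] at hsum
        nlinarith [hw Z]
    _ = (∑ Z with i ∈ Z, w Z * #Z * ω Z) * f i := by rw [sum_mul]
    _ ≤ s * f i := mul_le_mul_of_nonneg_right (hs i) (hf i)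

end Combinatorics

section Interaction

open Finset Metric

variable {A Λ : Type*} [NormedRing A] [StarRing A] [Fintype Λ] [DecidableEq Λ] [MetricSpace Λ]
  {μ s : ℝ} {u : Finset Λ → A}

structure IsDecayingInteraction (μ s : ℝ) (u : Finset Λ → A) : Prop where
  isSelfAdjoint : ∀ Z, IsSelfAdjoint (u Z)
  commute : ∀ Z W, Disjoint Z W → Commute (u Z) (u W)
  sum_le : ∀ i, ∑ Z with i ∈ Z, ‖u Z‖ * #Z * Real.exp (μ * diam (Z : Set Λ)) ≤ s

lemma IsDecayingInteraction.neg (hu : IsDecayingInteraction μ s u) :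
    IsDecayingInteraction μ s (-u) where
  isSelfAdjoint Z := (hu.isSelfAdjoint Z).neg
  commute Z W hZW := (hu.commute Z W hZW).neg_left.neg_right
  sum_le := by simpa only [Pi.neg_apply, norm_neg] using hu.sum_le

lemma IsDecayingInteraction.norm_lie_sum_le (hu : IsDecayingInteraction μ s u) {S : Finset Λ}
    {x : Finset Λ → A} {b : A} {f : Λ → ℝ} (hf : ∀ i, 0 ≤ f i)
    (hfμ : ∀ Z : Finset Λ, ∀ i ∈ Z, ∀ j ∈ Z, f j ≤ Real.exp (μ * diam (Z : Set Λ)) * f i)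
    (hx : ∀ Z, (Z ∩ S).Nonempty → ‖⁅x Z, b⁆‖ ≤ 2 * ‖u Z‖ * ‖b‖ * ∑ j ∈ Z, f j) :
    ‖⁅∑ Z with (Z ∩ S).Nonempty, x Z, b⁆‖ ≤ 2 * ‖b‖ * (s * ∑ i ∈ S, f i) := by
  rw [Ring.sum_lie]
  refine (norm_sum_le _ _).trans ?_
  calc ∑ Z with (Z ∩ S).Nonempty, ‖⁅x Z, b⁆‖
      ≤ ∑ Z with (Z ∩ S).Nonempty, 2 * ‖b‖ * (‖u Z‖ * ∑ j ∈ Z, f j) :=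
        sum_le_sum fun Z hZ => (hx Z (mem_filter.1 hZ).2).trans_eq (by ring)
    _ ≤ 2 * ‖b‖ * (s * ∑ i ∈ S, f i) := by
        rw [← mul_sum]
        gcongr
        exact sum_filter_inter_nonempty_mul_sum_le S (fun Z => norm_nonneg _) hf hfμ hu.sum_le

end Interaction

section Distance

open Finset Metric

variable {Λ : Type*} [MetricSpace Λ] {μ s : ℝ}

lemma lrBound_exp_neg_mul_infDist_le (hμ : 0 ≤ μ) (hs : 0 ≤ s) (Y : Set Λ) {Z : Finset Λ}
    {i j : Λ} (hi : i ∈ Z) (hj : j ∈ Z) (m : ℕ) {t : ℝ} (ht : 0 ≤ t) :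
    lrBound s (Real.exp (-(μ * infDist j Y))) m t ≤
      Real.exp (μ * diam (Z : Set Λ)) * lrBound s (Real.exp (-(μ * infDist i Y))) m t := by
  refine lrBound_le_mul hs (Real.one_le_exp (mul_nonneg hμ diam_nonneg)) ?_ m ht
  rw [← Real.exp_add, Real.exp_le_exp]
  have hij := infDist_le_infDist_add_dist (x := i) (y := j) (s := Y)
  have hdiam := dist_le_diam_of_mem Z.finite_toSet.isBounded (mem_coe.2 hi) (mem_coe.2 hj)
  nlinarith

lemma norm_lie_le_sum_exp_neg_mul_infDist {A : Type*} [NormedRing A] [DecidableEq Λ] (μ : ℝ)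
    {c b : A} {S Y : Finset Λ} (hcb : S ∩ Y = ∅ → Commute c b) :
    ‖⁅c, b⁆‖ ≤ 2 * ‖c‖ * ‖b‖ * ∑ i ∈ S, Real.exp (-(μ * infDist i Y)) := by
  by_cases hSY : S ∩ Y = ∅
  · rw [Ring.lie_def, (hcb hSY).eq, sub_self, norm_zero]
    positivity
  obtain ⟨i, hi⟩ := nonempty_iff_ne_empty.2 hSY
  rw [mem_inter] at hi
  have hone : Real.exp (-(μ * infDist i Y)) ≤ ∑ i ∈ S, Real.exp (-(μ * infDist i Y)) :=
    single_le_sum (f := fun j => Real.exp (-(μ * infDist j (Y : Set Λ))))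
      (fun j _ => (Real.exp_pos _).le) hi.1
  rw [infDist_zero_of_mem (mem_coe.2 hi.2), mul_zero, neg_zero, Real.exp_zero] at hone
  exact (Ring.norm_lie_le c b).trans (le_mul_of_one_le_right (by positivity) hone)

end Distance

section LiebRobinson

open Finset Metric

variable {A : Type*} [NormedRing A] [NormedAlgebra ℂ A] [StarRing A] [CStarRing A]
  [StarModule ℂ A] [CompleteSpace A] {Λ : Type*} [Fintype Λ] [DecidableEq Λ] [MetricSpace Λ]
  {μ s : ℝ} {u : Finset Λ → A} {b : A} {Y : Finset Λ}

lemma IsDecayingInteraction.norm_lie_evolve_le_sum_lrBound_succ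
    (hu : IsDecayingInteraction μ s u) (hμ : 0 ≤ μ) (hs : 0 ≤ s) {m : ℕ} {S : Finset Λ} {c : A}
    (hc : ∀ Z, Z ∩ S = ∅ → Commute c (u Z)) (hcb : S ∩ Y = ∅ → Commute c b) {t : ℝ}
    (ht : 0 ≤ t)
    (ih : ∀ Z, (Z ∩ S).Nonempty → ∀ τ : ℝ, 0 ≤ τ → ‖⁅evolve (∑ Z, u Z) τ (u Z), b⁆‖ ≤
      2 * ‖u Z‖ * ‖b‖ * ∑ j ∈ Z, lrBound s (Real.exp (-(μ * infDist j Y))) m τ) :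
    ‖⁅evolve (∑ Z, u Z) t c, b⁆‖ ≤
      2 * ‖c‖ * ‖b‖ * ∑ i ∈ S, lrBound s (Real.exp (-(μ * infDist i Y))) (m + 1) t := by
  set ψ : Λ → ℝ → ℝ := fun i τ => lrBound s (Real.exp (-(μ * infDist i Y))) m τ with hψ
  set L := ∑ Z with ¬(Z ∩ S).Nonempty, u Z
  have hcL : Commute c L := Commute.sum_right _ _ _ fun Z hZ =>
    hc Z (not_nonempty_iff_eq_empty.1 (mem_filter.1 hZ).2)
  have hHL : ∑ Z, u Z - L = ∑ Z with (Z ∩ S).Nonempty, u Z := by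
    rw [← sum_filter_add_sum_filter_not univ (fun Z => (Z ∩ S).Nonempty), add_sub_cancel_right]
  have hstep : ∀ τ ∈ Set.Icc 0 t,
      ‖⁅evolve (∑ Z, u Z) τ (∑ Z, u Z - L), b⁆‖ ≤ 2 * ‖b‖ * (s * ∑ i ∈ S, ψ i τ) :=
    fun τ hτ => by
      rw [hHL, evolve_sum]
      exact hu.norm_lie_sum_le (fun i => lrBound_nonneg hs (Real.exp_pos _).le m hτ.1)
        (fun Z i hi j hj => lrBound_exp_neg_mul_infDist_le hμ hs (Y : Set Λ) hi hj m hτ.1)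
        fun Z hZ => ih Z hZ τ hτ.1
  have hψc : ∀ i, Continuous (ψ i) := fun i => continuous_lrBound _ _ m
  have hint : ∫ τ in (0 : ℝ)..t, 2 * ‖b‖ * (s * ∑ i ∈ S, ψ i τ) =
      ‖b‖ * ∑ i ∈ S, 2 * s * ∫ τ in (0 : ℝ)..t, ψ i τ := by
    rw [intervalIntegral.integral_const_mul, intervalIntegral.integral_const_mul,
      intervalIntegral.integral_finsetSum fun i _ => (hψc i).intervalIntegrable _ _,
      mul_sum, mul_sum, mul_sum]
    exact sum_congr rfl fun i _ => by ring
  have hsa : ∀ T : Finset (Finset Λ), IsSelfAdjoint (∑ Z ∈ T, u Z) := fun T =>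
    isSelfAdjoint_sum T fun Z _ => hu.isSelfAdjoint Z
  calc ‖⁅evolve (∑ Z, u Z) t c, b⁆‖
      ≤ ‖⁅c, b⁆‖ + 2 * ‖c‖ * ∫ τ in (0 : ℝ)..t, ‖⁅evolve (∑ Z, u Z) τ (∑ Z, u Z - L), b⁆‖ :=
        norm_lie_evolve_le_add_integral (hsa _) (hsa _) hcL b ht
    _ ≤ 2 * ‖c‖ * ‖b‖ * ∑ i ∈ S, Real.exp (-(μ * infDist i Y)) +
          2 * ‖c‖ * ∫ τ in (0 : ℝ)..t, 2 * ‖b‖ * (s * ∑ i ∈ S, ψ i τ) := by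
        refine add_le_add (norm_lie_le_sum_exp_neg_mul_infDist μ hcb)
          (mul_le_mul_of_nonneg_left (intervalIntegral.integral_mono_on ht
            (Continuous.intervalIntegrable ?_ _ _) (Continuous.intervalIntegrable ?_ _ _) hstep)
            (by positivity))
        · simp only [Ring.lie_def]
          fun_prop
        · fun_prop
    _ = 2 * ‖c‖ * ‖b‖ * ∑ i ∈ S, lrBound s (Real.exp (-(μ * infDist i Y))) (m + 1) t := by
        rw [hint]
        simp only [lrBound, hψ, sum_add_distrib]
        ring

theorem IsDecayingInteraction.norm_lie_evolve_le_sum_lrBound (hu : IsDecayingInteraction μ s u)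
    (hμ : 0 ≤ μ) (hs : 0 ≤ s) (hb : ∀ Z, Z ∩ Y = ∅ → Commute b (u Z)) :
    ∀ (m : ℕ) {S : Finset Λ}, S.Nonempty → ∀ {c : A}, (∀ Z, Z ∩ S = ∅ → Commute c (u Z)) →
      (S ∩ Y = ∅ → Commute c b) → ∀ {t : ℝ}, 0 ≤ t →
      ‖⁅evolve (∑ Z, u Z) t c, b⁆‖ ≤
        2 * ‖c‖ * ‖b‖ * ∑ i ∈ S, lrBound s (Real.exp (-(μ * infDist i Y))) m t
  | 0, S, hS, c, _, _, t, _ => by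
    have hH : IsSelfAdjoint (∑ Z, u Z) := isSelfAdjoint_sum _ fun Z _ => hu.isSelfAdjoint Z
    simp only [lrBound, sum_const, nsmul_eq_mul, mul_one]
    calc ‖⁅evolve (∑ Z, u Z) t c, b⁆‖ ≤ 2 * ‖c‖ * ‖b‖ := by
          simpa only [norm_evolve hH] using Ring.norm_lie_le (evolve (∑ Z, u Z) t c) b
      _ ≤ 2 * ‖c‖ * ‖b‖ * #S :=
          le_mul_of_one_le_right (by positivity) (by exact_mod_cast card_pos.2 hS)
  | m + 1, _, _, _, hc, hcb, _, ht =>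
    hu.norm_lie_evolve_le_sum_lrBound_succ hμ hs hc hcb ht fun Z hZ _ hτ =>
      hu.norm_lie_evolve_le_sum_lrBound hμ hs hb m (hZ.mono inter_subset_left)
        (fun W hW => hu.commute Z W (disjoint_iff_inter_eq_empty.2 (by rwa [inter_comm])))
        (fun hZY => (hb Z hZY).symm) hτ

theorem IsDecayingInteraction.norm_lie_evolve_le_sum_exp (hu : IsDecayingInteraction μ s u)
    (hμ : 0 ≤ μ) (hs : 0 ≤ s) (hb : ∀ Z, Z ∩ Y = ∅ → Commute b (u Z))
    {S : Finset Λ} (hS : S.Nonempty) {c : A} (hc : ∀ Z, Z ∩ S = ∅ → Commute c (u Z))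
    (hcb : S ∩ Y = ∅ → Commute c b) {t : ℝ} (ht : 0 ≤ t) :
    ‖⁅evolve (∑ Z, u Z) t c, b⁆‖ ≤
      2 * ‖c‖ * ‖b‖ * ∑ i ∈ S, Real.exp (-(μ * infDist i Y) + 2 * s * t) := by
  have hbound : ∀ m : ℕ, ‖⁅evolve (∑ Z, u Z) t c, b⁆‖ ≤ 2 * ‖c‖ * ‖b‖ *
      ∑ i ∈ S, (Real.exp (-(μ * infDist i Y)) * Real.exp (2 * s * t) +
        (2 * s * t) ^ m / m.factorial) := fun m =>
    (hu.norm_lie_evolve_le_sum_lrBound hμ hs hb m hS hc hcb ht).trans <| by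
      gcongr with i
      exact lrBound_le_exp_add_pow hs (Real.exp_pos _).le m ht
  have hlim := ((tendsto_finsetSum S fun i _ =>
    (FloorSemiring.tendsto_pow_div_factorial_atTop (2 * s * t)).const_add
      (Real.exp (-(μ * infDist i Y)) * Real.exp (2 * s * t))).const_mul (2 * ‖c‖ * ‖b‖))
  simpa only [add_zero, Real.exp_add] using ge_of_tendsto' hlim hbound

theorem IsDecayingInteraction.norm_lie_evolve_le_sum_exp_abs (hu : IsDecayingInteraction μ s u)
    (hμ : 0 ≤ μ) (hs : 0 ≤ s) (hb : ∀ Z, Z ∩ Y = ∅ → Commute b (u Z))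
    {S : Finset Λ} (hS : S.Nonempty) {c : A} (hc : ∀ Z, Z ∩ S = ∅ → Commute c (u Z))
    (hcb : S ∩ Y = ∅ → Commute c b) (t : ℝ) :
    ‖⁅evolve (∑ Z, u Z) t c, b⁆‖ ≤
      2 * ‖c‖ * ‖b‖ * ∑ i ∈ S, Real.exp (-(μ * infDist i Y) + 2 * s * |t|) := by
  rcases le_or_gt 0 t with ht | ht
  · rw [abs_of_nonneg ht]
    exact hu.norm_lie_evolve_le_sum_exp hμ hs hb hS hc hcb ht
  -- Backwards in time, `H` evolves like `-H` forwards.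
  rw [abs_of_neg ht, ← evolve_neg_neg, ← sum_neg_distrib]
  exact hu.neg.norm_lie_evolve_le_sum_exp hμ hs (fun Z hZ => (hb Z hZ).neg_right) hS
    (fun Z hZ => (hc Z hZ).neg_right) hcb (neg_pos.2 ht).le

theorem IsDecayingInteraction.norm_lie_evolve_le_of_le_infDist
    (hu : IsDecayingInteraction μ s u) (hμ : 0 ≤ μ) (hs : 0 ≤ s)
    (hb : ∀ Z, Z ∩ Y = ∅ → Commute b (u Z)) {X : Finset Λ} (hX : X.Nonempty) {a : A}
    (ha : ∀ Z, Z ∩ X = ∅ → Commute a (u Z)) (hab : Commute a b) {d t : ℝ}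
    (hd : ∀ i ∈ X, d ≤ infDist i Y) (hlc : 4 * s * |t| ≤ μ * d) :
    ‖⁅evolve (∑ Z, u Z) t a, b⁆‖ ≤ 2 * #X * ‖a‖ * ‖b‖ * Real.exp (-(μ / 2) * d) := by
  have hterm : ∀ i ∈ X,
      Real.exp (-(μ * infDist i Y) + 2 * s * |t|) ≤ Real.exp (-(μ / 2) * d) := fun i hi =>
    Real.exp_le_exp.2 (by nlinarith [mul_le_mul_of_nonneg_left (hd i hi) hμ])
  calc ‖⁅evolve (∑ Z, u Z) t a, b⁆‖
      ≤ 2 * ‖a‖ * ‖b‖ * ∑ i ∈ X, Real.exp (-(μ * infDist i Y) + 2 * s * |t|) :=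
        hu.norm_lie_evolve_le_sum_exp_abs hμ hs hb hX ha (fun _ => hab) t
    _ ≤ 2 * ‖a‖ * ‖b‖ * (#X * Real.exp (-(μ / 2) * d)) := by
        gcongr
        simpa only [nsmul_eq_mul] using sum_le_card_nsmul X _ _ hterm
    _ = 2 * #X * ‖a‖ * ‖b‖ * Real.exp (-(μ / 2) * d) := by ring

end LiebRobinson

lemma setDist_le_infDist {Λ : Type} [MetricSpace Λ] {X Y : Finset Λ} (hY : Y.Nonempty) {i : Λ}
    (hi : i ∈ X) : setDist X Y ≤ Metric.infDist i Y := by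
  obtain ⟨j, hj, hij⟩ :=
    Y.finite_toSet.isCompact.exists_infDist_eq_dist (Finset.coe_nonempty.2 hY) i
  rw [hij]
  exact csInf_le ⟨0, by rintro _ ⟨_, _, _, _, rfl⟩; exact dist_nonneg⟩ ⟨i, hi, j, hj, rfl⟩

theorem stmt_4_general {n : ℕ} {Λ : Type} [Fintype Λ] [DecidableEq Λ] [MetricSpace Λ]
    (μ s : ℝ) (hμ : 0 < μ) (hs : 0 < s)
    (h : Finset Λ → Matrix (Fin n) (Fin n) ℂ)
    (hherm : ∀ Z, (h Z).IsHermitian)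
    (hdisj : ∀ Z W : Finset Λ, Disjoint Z W → h Z * h W = h W * h Z)
    (hdecay : ∀ i : Λ, ∑ Z ∈ Finset.univ.filter (fun Z : Finset Λ => i ∈ Z),
        opNorm (h Z) * (Z.card : ℝ) * Real.exp (μ * Metric.diam (Z : Set Λ)) ≤ s)
    (A B : Matrix (Fin n) (Fin n) ℂ) (X Y : Finset Λ)
    (hX : X.Nonempty) (hY : Y.Nonempty)
    (hA : IsLocalized h A X) (hB : IsLocalized h B Y)
    (hAB : A * B = B * A) (t : ℝ)
    (hlc : (4 * s / μ) * |t| ≤ setDist X Y) :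
    opNorm (timeEvol (∑ Z, h Z) A t * B - B * timeEvol (∑ Z, h Z) A t) ≤
      2 * (X.card : ℝ) * opNorm A * opNorm B * Real.exp (-(μ / 2) * setDist X Y) := by
  have hlc' : 4 * s * |t| ≤ μ * setDist X Y := by
    rw [div_mul_eq_mul_div, div_le_iff₀ hμ] at hlc
    linarith
  -- With the L2 operator norm on matrices, `opNorm`, `timeEvol` and `x * y - y * x` are
  -- definitionally `‖·‖`, `evolve` and `⁅x, y⁆`.
  open scoped Matrix.Norms.L2Operator in
  exact IsDecayingInteraction.norm_lie_evolve_le_of_le_infDist ⟨hherm, hdisj, hdecay⟩ hμ.le hs.le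
    hB hX hA hAB (fun i hi => setDist_le_infDist hY hi) hlc'

/-- Light-cone form of the Lieb-Robinson bound: with `v_LR = 4s/μ`, if
`dist(X,Y) ≥ v_LR |t|` then `‖[A(t),B]‖ ≤ 2|X| ‖A‖‖B‖ e^{−(μ/2) dist(X,Y)}`. -/
theorem stmt_4 {n : ℕ} (hn : 1 ≤ n) {Λ : Type} [Fintype Λ] [DecidableEq Λ] [MetricSpace Λ]
    (μ s : ℝ) (hμ : 0 < μ) (hs : 0 < s)
    (h : Finset Λ → Matrix (Fin n) (Fin n) ℂ)
    (hherm : ∀ Z, (h Z).IsHermitian)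
    (hdisj : ∀ Z W : Finset Λ, Disjoint Z W → h Z * h W = h W * h Z)
    (hdecay : ∀ i : Λ, ∑ Z ∈ Finset.univ.filter (fun Z : Finset Λ => i ∈ Z),
        opNorm (h Z) * (Z.card : ℝ) * Real.exp (μ * Metric.diam (Z : Set Λ)) ≤ s)
    (A B : Matrix (Fin n) (Fin n) ℂ) (X Y : Finset Λ)
    (hX : X.Nonempty) (hY : Y.Nonempty)
    (hA : IsLocalized h A X) (hB : IsLocalized h B Y)
    (hAB : A * B = B * A) (hXY : 0 < setDist X Y) (t : ℝ)
    (hlc : (4 * s / μ) * |t| ≤ setDist X Y) :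
    opNorm (timeEvol (∑ Z, h Z) A t * B - B * timeEvol (∑ Z, h Z) A t) ≤
      2 * (X.card : ℝ) * opNorm A * opNorm B * Real.exp (-(μ / 2) * setDist X Y) :=
  stmt_4_general μ s hμ hs h hherm hdisj hdecay A B X Y hX hY hA hB hAB t hlc
end

section
/- Let Λ be a finite metric space with metric dist; for Z ⊆ Λ let diam(Z) = max_{i,j∈Z} dist(i,j), and for i ∈ Λ and Y ⊆ Λ let dist(i,Y) = min_{j∈Y} dist(i,j). Let w assign to each subset Z ⊆ Λ a nonnegative real w(Z), and let μ, s > 0 satisfy, for every i ∈ Λ, Σ_{Z ∋ i} w(Z)·|Z|·exp(μ·diam(Z)) ≤ s. Then for all nonempty subsets X, Y ⊆ Λ and every integer k ≥ 1, the sum over all k-tuples (Z₁,…,Z_k) of subsets of Λ satisfying Z₁ ∩ X ≠ ∅, Z_j ∩ Z_{j+1} ≠ ∅ for 1 ≤ j < k, and Z_k ∩ Y ≠ ∅, of the product Π_{j=1}^k w(Z_j), is at most s^k · Σ_{i∈X} e^{−μ·dist(i,Y)}. -/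
open scoped Classical

/-!
Induct on the chain length by peeling off the first set `Z₁`, which must meet `X`: the rest of
the chain runs from `Z₁` to `Y`, so by induction it costs at most `s^k ∑_{j∈Z₁} e^{-μ dist(j,Y)}`.
By the triangle inequality each term is at most `e^{μ diam Z₁} e^{-μ dist(i,Y)}` for any
`i ∈ Z₁ ∩ X`, and summing `w(Z₁) |Z₁| e^{μ diam Z₁}` over the sets `Z₁ ∋ i` costs one more
factor `s`. A single set meeting `Y` contributes at least `e⁰ = 1`, which starts the induction.
-/

/-- `chainSum w X Y k` is the sum over `(k+1)`-tuples `(Z₀, …, Z_k)` of subsets of `Λ` with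
`Z₀ ∩ X ≠ ∅`, `Z_j ∩ Z_{j+1} ≠ ∅` for consecutive indices, and `Z_k ∩ Y ≠ ∅`, of the products
`∏_j w (Z_j)`; i.e. the sum over chains of length `k+1` connecting `X` to `Y`. -/
noncomputable def chainSum {Λ : Type} [Fintype Λ] [DecidableEq Λ]
    (w : Finset Λ → ℝ) (X Y : Finset Λ) (k : ℕ) : ℝ :=
  ∑ Z : Fin (k + 1) → Finset Λ,
    if (Z 0 ∩ X).Nonempty ∧ (∀ j : Fin k, (Z j.castSucc ∩ Z j.succ).Nonempty) ∧
        (Z (Fin.last k) ∩ Y).Nonempty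
    then ∏ j, w (Z j) else 0

open Metric Real Finset

section decaySum
variable {Λ : Type} [PseudoMetricSpace Λ]

noncomputable def decaySum (μ : ℝ) (Y X : Finset Λ) : ℝ :=
  ∑ i ∈ X, exp (-μ * infDist i (Y : Set Λ))

lemma decaySum_nonneg (μ : ℝ) (Y X : Finset Λ) : 0 ≤ decaySum μ Y X :=
  sum_nonneg fun _ _ ↦ (exp_pos _).le

lemma one_le_decaySum {μ : ℝ} {Y Z : Finset Λ} [DecidableEq Λ] (h : (Z ∩ Y).Nonempty) :
    1 ≤ decaySum μ Y Z := by
  obtain ⟨j, hj⟩ := h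
  rw [mem_inter] at hj
  calc (1 : ℝ) = exp (-μ * infDist j (Y : Set Λ)) := by
        rw [infDist_zero_of_mem (mem_coe.2 hj.2), mul_zero, exp_zero]
    _ ≤ decaySum μ Y Z :=
      single_le_sum (f := fun i ↦ exp (-μ * infDist i (Y : Set Λ))) (fun _ _ ↦ (exp_pos _).le) hj.1

lemma decaySum_le_card_mul_exp_diam {μ : ℝ} (hμ : 0 ≤ μ) (Y : Finset Λ) {Z : Finset Λ} {i : Λ}
    (hi : i ∈ Z) :
    decaySum μ Y Z ≤ Z.card * exp (μ * diam (Z : Set Λ)) * exp (-μ * infDist i (Y : Set Λ)) := by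
  rw [mul_assoc, ← nsmul_eq_mul, ← sum_const]
  refine sum_le_sum fun j hj ↦ ?_
  rw [← exp_add, exp_le_exp]
  have hij : infDist i (Y : Set Λ) ≤ infDist j (Y : Set Λ) + diam (Z : Set Λ) :=
    infDist_le_infDist_add_dist.trans
      (add_le_add le_rfl (dist_le_diam_of_mem Z.finite_toSet.isBounded hi hj))
  nlinarith

end decaySum

section chainSum
variable {Λ : Type} [Fintype Λ] [DecidableEq Λ]

lemma chainSum_zero (w : Finset Λ → ℝ) (X Y : Finset Λ) :
    chainSum w X Y 0
      = ∑ Z : Finset Λ, if (Z ∩ X).Nonempty ∧ (Z ∩ Y).Nonempty then w Z else 0 :=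
  Fintype.sum_equiv (Equiv.funUnique (Fin 1) (Finset Λ)) _ _ fun Z ↦ by
    simp [Fin.last_zero]

lemma chainSum_succ (w : Finset Λ → ℝ) (X Y : Finset Λ) (k : ℕ) :
    chainSum w X Y (k + 1)
      = ∑ Z : Finset Λ, if (Z ∩ X).Nonempty then w Z * chainSum w Z Y k else 0 := by
  rw [chainSum, ← (Fin.consEquiv fun _ ↦ Finset Λ).sum_comp, Fintype.sum_prod_type]
  refine sum_congr rfl fun Z₀ _ ↦ ?_
  simp only [Fin.consEquiv_apply, Fin.forall_fin_succ, Fin.cons_zero, Fin.castSucc_zero,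
    Fin.cons_succ, ← Fin.succ_castSucc, ← Fin.succ_last, Fin.prod_univ_succ]
  by_cases h : (X ∩ Z₀).Nonempty <;>
    simp [h, chainSum, mul_sum, mul_ite, inter_comm Z₀, Fin.prod_univ_succ, and_assoc]

variable [PseudoMetricSpace Λ]

lemma sum_weight_mul_decaySum_le {w : Finset Λ → ℝ} (hw : ∀ Z, 0 ≤ w Z) {μ s : ℝ} (hμ : 0 ≤ μ)
    (hdecay : ∀ i : Λ, ∑ Z ∈ univ.filter (fun Z : Finset Λ => i ∈ Z),
        w Z * (Z.card : ℝ) * exp (μ * diam (Z : Set Λ)) ≤ s)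
    (X Y : Finset Λ) :
    ∑ Z : Finset Λ, (if (Z ∩ X).Nonempty then w Z * decaySum μ Y Z else 0)
      ≤ s * decaySum μ Y X := by
  set g : Finset Λ → Λ → ℝ := fun Z i ↦
    w Z * Z.card * exp (μ * diam (Z : Set Λ)) * exp (-μ * infDist i (Y : Set Λ)) with hg
  have hg_nonneg : ∀ Z i, 0 ≤ g Z i := fun Z i ↦ by have := hw Z; positivity
  have hterm : ∀ Z, (if (Z ∩ X).Nonempty then w Z * decaySum μ Y Z else 0)
      ≤ ∑ i ∈ X, if i ∈ Z then g Z i else 0 := by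
    intro Z
    split_ifs with hZ
    · obtain ⟨i, hi⟩ := hZ
      rw [mem_inter] at hi
      calc w Z * decaySum μ Y Z
          ≤ w Z * (Z.card * exp (μ * diam (Z : Set Λ)) * exp (-μ * infDist i (Y : Set Λ))) :=
            mul_le_mul_of_nonneg_left (decaySum_le_card_mul_exp_diam hμ Y hi.1) (hw Z)
        _ = g Z i := by ring
        _ = if i ∈ Z then g Z i else 0 := (if_pos hi.1).symm
        _ ≤ _ := single_le_sum (f := fun i ↦ if i ∈ Z then g Z i else 0)
              (fun j _ ↦ by split_ifs <;> simp [hg_nonneg]) hi.2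
    · exact sum_nonneg fun j _ ↦ by split_ifs <;> simp [hg_nonneg]
  calc _ ≤ ∑ Z : Finset Λ, ∑ i ∈ X, if i ∈ Z then g Z i else 0 := sum_le_sum fun Z _ ↦ hterm Z
    _ = ∑ i ∈ X, (∑ Z ∈ univ.filter (fun Z : Finset Λ => i ∈ Z),
          w Z * (Z.card : ℝ) * exp (μ * diam (Z : Set Λ))) * exp (-μ * infDist i (Y : Set Λ)) := by
        rw [sum_comm]
        simp only [← sum_filter, hg, sum_mul]
    _ ≤ ∑ i ∈ X, s * exp (-μ * infDist i (Y : Set Λ)) :=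
        sum_le_sum fun i _ ↦ mul_le_mul_of_nonneg_right (hdecay i) (exp_pos _).le
    _ = s * decaySum μ Y X := (mul_sum _ _ _).symm

lemma chainSum_le_pow_mul_decaySum {w : Finset Λ → ℝ} (hw : ∀ Z, 0 ≤ w Z) {μ s : ℝ} (hμ : 0 ≤ μ)
    (hs : 0 ≤ s)
    (hdecay : ∀ i : Λ, ∑ Z ∈ univ.filter (fun Z : Finset Λ => i ∈ Z),
        w Z * (Z.card : ℝ) * exp (μ * diam (Z : Set Λ)) ≤ s)
    (Y : Finset Λ) (k : ℕ) (X : Finset Λ) :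
    chainSum w X Y k ≤ s ^ (k + 1) * decaySum μ Y X := by
  induction k generalizing X with
  | zero =>
    calc chainSum w X Y 0
        ≤ ∑ Z : Finset Λ, (if (Z ∩ X).Nonempty then w Z * decaySum μ Y Z else 0) := by
          rw [chainSum_zero]
          refine sum_le_sum fun Z _ ↦ ?_
          split_ifs with hXY hX
          · exact le_mul_of_one_le_right (hw Z) (one_le_decaySum hXY.2)
          · exact absurd hXY.1 hX
          · exact mul_nonneg (hw Z) (decaySum_nonneg _ _ _)
          · exact le_rfl
      _ ≤ s ^ (0 + 1) * decaySum μ Y X := by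
          rw [zero_add, pow_one]
          exact sum_weight_mul_decaySum_le hw hμ hdecay X Y
  | succ k ih =>
    calc chainSum w X Y (k + 1)
        ≤ ∑ Z : Finset Λ,
            (if (Z ∩ X).Nonempty then s ^ (k + 1) * (w Z * decaySum μ Y Z) else 0) := by
          rw [chainSum_succ]
          refine sum_le_sum fun Z _ ↦ ?_
          split_ifs
          · rw [mul_left_comm]
            exact mul_le_mul_of_nonneg_left (ih Z) (hw Z)
          · exact le_rfl
      _ = s ^ (k + 1) *
            ∑ Z : Finset Λ, (if (Z ∩ X).Nonempty then w Z * decaySum μ Y Z else 0) := by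
          simp only [mul_sum, mul_ite, mul_zero]
      _ ≤ s ^ (k + 1) * (s * decaySum μ Y X) :=
          mul_le_mul_of_nonneg_left (sum_weight_mul_decaySum_le hw hμ hdecay X Y)
            (pow_nonneg hs _)
      _ = s ^ (k + 1 + 1) * decaySum μ Y X := by ring

end chainSum

theorem stmt_5_general {Λ : Type} [Fintype Λ] [DecidableEq Λ] [MetricSpace Λ]
    (w : Finset Λ → ℝ) (hw : ∀ Z, 0 ≤ w Z)
    (μ s : ℝ) (hμ : 0 < μ) (hs : 0 < s)
    (hdecay : ∀ i : Λ, ∑ Z ∈ Finset.univ.filter (fun Z : Finset Λ => i ∈ Z),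
        w Z * (Z.card : ℝ) * Real.exp (μ * Metric.diam (Z : Set Λ)) ≤ s)
    (X Y : Finset Λ) (k : ℕ) :
    chainSum w X Y k ≤ s ^ (k + 1) * ∑ i ∈ X, Real.exp (-μ * Metric.infDist i (Y : Set Λ)) :=
  chainSum_le_pow_mul_decaySum hw hμ.le hs.le hdecay Y k X

/-- The combinatorial chain-sum estimate: if `∑_{Z∋i} w(Z) |Z| e^{μ diam Z} ≤ s` for every
site `i`, then for nonempty `X, Y` and every integer `k ≥ 1` (here written as `k+1` with
`k : ℕ`), the weighted sum over chains `(Z₁,…,Z_{k+1})` connecting `X` to `Y` is at most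
`s^{k+1} ∑_{i∈X} e^{−μ dist(i,Y)}`. -/
theorem stmt_5 {Λ : Type} [Fintype Λ] [DecidableEq Λ] [MetricSpace Λ]
    (w : Finset Λ → ℝ) (hw : ∀ Z, 0 ≤ w Z)
    (μ s : ℝ) (hμ : 0 < μ) (hs : 0 < s)
    (hdecay : ∀ i : Λ, ∑ Z ∈ Finset.univ.filter (fun Z : Finset Λ => i ∈ Z),
        w Z * (Z.card : ℝ) * Real.exp (μ * Metric.diam (Z : Set Λ)) ≤ s)
    (X Y : Finset Λ) (hX : X.Nonempty) (hY : Y.Nonempty) (k : ℕ) :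
    chainSum w X Y k ≤ s ^ (k + 1) * ∑ i ∈ X, Real.exp (-μ * Metric.infDist i (Y : Set Λ)) :=
  stmt_5_general w hw μ s hμ hs hdecay X Y k
end

section
/- Let L ≥ 2 be an integer and index by j ∈ ℤ/L. Let T be a unitary n×n complex matrix with T^L = I. Let (q_j)_{j∈ℤ/L} be pairwise commuting Hermitian n×n matrices whose spectra are contained in ℤ, with T q_j T^{−1} = q_{j+1} for all j. Set Q = Σ_{j∈ℤ/L} q_j and A = Σ_{j=0}^{L−1} 2π·(j/L)·q_j. Suppose ψ₀ ∈ ℂⁿ is a unit vector with T ψ₀ = z ψ₀ for some z ∈ ℂ with |z| = 1, and Q ψ₀ = q̄ ψ₀ for some q̄ ∈ ℝ. Then the vector Φ = e^{iA} ψ₀ satisfies T Φ = z·e^{−2πi q̄ / L}·Φ; in particular, if q̄/L is not an integer, then ⟨ψ₀, Φ⟩ = 0. -/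
/-!
Conjugation by `T` shifts `q j` to `q (j + 1)`, so summation by parts over `ℤ/L` gives
`T A T⁻¹ = A + 2π q₀ - (2π/L) Q`, the wrap-around term `q_L = q₀` producing `2π q₀`. All these
matrices commute and `e^{2πi q₀} = 1` because `q₀` is Hermitian with integer spectrum, hence
`T e^{iA} T⁻¹ = e^{iA} e^{-2πi Q/L}`; applied to `T ψ₀ = z ψ₀` this makes `Φ` an eigenvector of `T`
with eigenvalue `z e^{-2πi q̄/L}`. When `q̄/L ∉ ℤ` the two eigenvalues of the unitary `T` differ,
so `ψ₀ ⊥ Φ`.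
-/

open scoped Matrix ComplexConjugate
open NormedSpace Finset Complex Real

theorem ZMod.sum_range_natCast {M : Type*} [AddCommMonoid M] (L : ℕ) [NeZero L]
    (f : ZMod L → M) : ∑ j ∈ range L, f j = ∑ j, f j := by
  obtain ⟨m, rfl⟩ : ∃ m, L = m + 1 := Nat.exists_eq_succ_of_ne_zero (NeZero.ne L)
  rw [← Fin.sum_univ_eq_sum_range]
  exact Fintype.sum_congr _ _ fun j => congrArg f (ZMod.natCast_zmod_val (n := m + 1) j)

theorem ZMod.sum_range_nsmul_comp_add_one {M : Type*} [AddCommMonoid M] (L : ℕ) [NeZero L]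
    (q : ZMod L → M) :
    ∑ j ∈ range L, j • q (j + 1) + ∑ j, q j = ∑ j ∈ range L, j • q j + L • q 0 := by
  have hshift : ∑ j, q j = ∑ j ∈ range L, q (j + 1) := by
    rw [ZMod.sum_range_natCast L (q <| · + 1)]
    exact (Equiv.sum_comp (Equiv.addRight (1 : ZMod L)) q).symm
  have hsucc : ∑ j ∈ range L, (j + 1) • q (j + 1) = ∑ j ∈ range (L + 1), j • q j := by
    simp [sum_range_succ' _ L]
  rw [hshift, ← sum_add_distrib]
  simp_rw [← succ_nsmul]
  rw [hsucc, sum_range_succ, ZMod.natCast_self]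

theorem Complex.exp_neg_two_pi_I_mul_div_ne_one {x y : ℝ} (h : ∀ k : ℤ, x / y ≠ k) :
    Complex.exp (-(2 * π * I * x / y)) ≠ 1 := by
  rw [Ne, Complex.exp_eq_one_iff]
  rintro ⟨k, hk⟩
  apply h (-k)
  have h2πI : 2 * π * I ≠ 0 := by simp [Real.pi_ne_zero, I_ne_zero]
  have : ((x / y : ℝ) : ℂ) = ((-k : ℤ) : ℂ) := by
    apply mul_left_cancel₀ h2πI
    push_cast
    linear_combination -hk
  exact_mod_cast this

namespace Matrix

variable {m : Type*} [Fintype m] [DecidableEq m]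

open scoped Norms.Operator in
theorem exp_mulVec_of_mulVec_eq_smul {𝕂 : Type*} [RCLike 𝕂] {M : Matrix m m 𝕂} {ψ : m → 𝕂}
    {c : 𝕂} (h : M *ᵥ ψ = c • ψ) : exp M *ᵥ ψ = exp c • ψ := by
  have hpow (k : ℕ) : M ^ k *ᵥ ψ = c ^ k • ψ := by
    induction k with
    | zero => simp
    | succ k ih => rw [pow_succ', ← mulVec_mulVec, ih, mulVec_smul, h, smul_smul, pow_succ]
  let applyψ : Matrix m m 𝕂 →+ (m → 𝕂) := ⟨⟨(· *ᵥ ψ), zero_mulVec ψ⟩, (add_mulVec · · ψ)⟩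
  have hM := (exp_series_hasSum_exp' (𝕂 := 𝕂) M).map applyψ
    (continuous_id.matrix_mulVec continuous_const)
  refine hM.unique ?_
  convert (exp_series_hasSum_exp' (𝕂 := 𝕂) c).smul_const ψ using 2 with k
  simp [applyψ, smul_mulVec, hpow, smul_smul]

open scoped Norms.L2Operator in
theorem IsHermitian.exp_two_pi_I_smul_eq_one {A : Matrix m m ℂ} (hA : A.IsHermitian)
    (hint : spectrum ℂ A ⊆ Set.range ((↑) : ℤ → ℂ)) :
    NormedSpace.exp ((2 * π * I) • A) = 1 := by
  have : IsStarNormal A := hA.isSelfAdjoint.isStarNormal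
  rw [← CFC.exp_eq_normedSpace_exp (𝕜 := ℂ), ← cfc_comp_smul _ _ A, ← cfc_const_one ℂ A]
  refine cfc_congr fun x hx => ?_
  obtain ⟨k, rfl⟩ := hint hx
  rw [smul_eq_mul, mul_comm, ← Complex.exp_eq_exp_ℂ, Complex.exp_int_mul_two_pi_mul_I]

theorem dotProduct_eq_zero_of_mulVec_eq_smul {𝕜 : Type*} [RCLike 𝕜] {T : Matrix m m 𝕜}
    (hT : Tᴴ * T = 1) {z w : 𝕜} (hz : ‖z‖ = 1) {ψ Φ : m → 𝕜} (hψ : T *ᵥ ψ = z • ψ)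
    (hΦ : T *ᵥ Φ = w • Φ) (hne : w ≠ z) : star ψ ⬝ᵥ Φ = 0 := by
  have hz0 : z ≠ 0 := norm_ne_zero_iff.mp (hz ▸ one_ne_zero)
  have hadj : Tᴴ *ᵥ ψ = conj z • ψ := by
    rw [← RCLike.inv_eq_conj hz, eq_inv_smul_iff₀ hz0, ← mulVec_smul, ← hψ, mulVec_mulVec, hT,
      one_mulVec]
  have h : w * (star ψ ⬝ᵥ Φ) = z * (star ψ ⬝ᵥ Φ) := by
    rw [← smul_eq_mul, ← dotProduct_smul, ← hΦ, dotProduct_mulVec,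
      ← conjTranspose_conjTranspose T, ← star_mulVec, hadj, star_smul]
    simp
  exact (mul_eq_mul_right_iff.mp h).resolve_left hne

end Matrix

section Twist

variable {m : Type*} {L : ℕ} {q : ZMod L → Matrix m m ℂ}

noncomputable def twistGenerator (q : ZMod L → Matrix m m ℂ) : Matrix m m ℂ :=
  (2 * π / L : ℂ) • ∑ j ∈ range L, j • q j

theorem sum_fin_smul_eq_twistGenerator :
    ∑ j : Fin L, ((2 * π * (j : ℝ) / (L : ℝ) : ℝ) : ℂ) • q ((j : ℕ) : ZMod L) =
      twistGenerator q := by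
  rw [Fin.sum_univ_eq_sum_range (fun j => ((2 * π * j / L : ℝ) : ℂ) • q j), twistGenerator,
    smul_sum]
  refine sum_congr rfl fun j _ => ?_
  rw [← Nat.cast_smul_eq_nsmul ℂ, smul_smul]
  push_cast
  ring_nf

variable [Fintype m] [DecidableEq m]

theorem conj_twistGenerator [NeZero L] {T : Matrix m m ℂ}
    (htrans : ∀ j, T * q j * Tᴴ = q (j + 1)) :
    T * twistGenerator q * Tᴴ =
      twistGenerator q + (2 * π : ℂ) • q 0 - (2 * π / L : ℂ) • ∑ j, q j := by
  have hshift : T * (∑ j ∈ range L, j • q j) * Tᴴ = ∑ j ∈ range L, j • q (j + 1) := by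
    simp_rw [mul_sum, sum_mul, mul_smul_comm, smul_mul_assoc, htrans]
  have hL : (2 * π / L : ℂ) * L = 2 * π :=
    div_mul_cancel₀ _ (Nat.cast_ne_zero.mpr (NeZero.ne L))
  rw [twistGenerator, mul_smul_comm, smul_mul_assoc, hshift,
    eq_sub_of_add_eq (ZMod.sum_range_nsmul_comp_add_one L q), smul_sub, smul_add,
    ← Nat.cast_smul_eq_nsmul ℂ, smul_smul, hL]

theorem commute_twistGenerator (hcomm : ∀ j k, Commute (q j) (q k)) (k : ZMod L) :
    Commute (twistGenerator q) (q k) :=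
  .smul_left (.sum_left _ _ _ fun (j : ℕ) _ => Commute.smul_left (hcomm j k) j) _

theorem conj_exp_I_smul_twistGenerator [NeZero L] {T : Matrix m m ℂ} (hT1 : T * Tᴴ = 1)
    (hT2 : Tᴴ * T = 1) (htrans : ∀ j, T * q j * Tᴴ = q (j + 1))
    (hcomm : ∀ j k, Commute (q j) (q k)) (hherm : (q 0).IsHermitian)
    (hint : spectrum ℂ (q 0) ⊆ Set.range ((↑) : ℤ → ℂ)) :
    T * exp (I • twistGenerator q) * Tᴴ =
      exp (I • twistGenerator q) * exp (-(2 * π * I / L) • ∑ j, q j) := by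
  set A := twistGenerator q
  set Q := ∑ j, q j
  have hconj : T * (I • A) * Tᴴ = I • A + ((2 * π * I) • q 0 + -(2 * π * I / L) • Q) := by
    rw [mul_smul_comm, smul_mul_assoc, conj_twistGenerator htrans]
    module
  have hAQ : Commute A Q := .sum_right _ _ _ fun k _ => commute_twistGenerator hcomm k
  have hq0Q : Commute (q 0) Q := .sum_right _ _ _ fun k _ => hcomm 0 k
  have hA : Commute (I • A) ((2 * π * I) • q 0 + -(2 * π * I / L) • Q) :=
    (((commute_twistGenerator hcomm 0).smul_left _).smul_right _).add_right
      ((hAQ.smul_left _).smul_right _)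
  calc T * exp (I • A) * Tᴴ = exp (T * (I • A) * Tᴴ) :=
        (Matrix.exp_units_conj ⟨T, Tᴴ, hT1, hT2⟩ _).symm
    _ = exp (I • A) * exp (-(2 * π * I / L) • Q) := by
      rw [hconj, Matrix.exp_add_of_commute _ _ hA,
        Matrix.exp_add_of_commute _ _ ((hq0Q.smul_left _).smul_right _),
        hherm.exp_two_pi_I_smul_eq_one hint, one_mul]

theorem mulVec_exp_I_smul_twistGenerator [NeZero L] {T : Matrix m m ℂ} (hT1 : T * Tᴴ = 1)
    (hT2 : Tᴴ * T = 1) (htrans : ∀ j, T * q j * Tᴴ = q (j + 1))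
    (hcomm : ∀ j k, Commute (q j) (q k)) (hherm : (q 0).IsHermitian)
    (hint : spectrum ℂ (q 0) ⊆ Set.range ((↑) : ℤ → ℂ)) {ψ : m → ℂ} {z c : ℂ}
    (hTψ : T *ᵥ ψ = z • ψ) (hQψ : (∑ j, q j) *ᵥ ψ = c • ψ) :
    T *ᵥ (exp (I • twistGenerator q) *ᵥ ψ) =
      (z * Complex.exp (-(2 * π * I * c / L))) • (exp (I • twistGenerator q) *ᵥ ψ) := by
  have hQ : exp (-(2 * π * I / L) • ∑ j, q j) *ᵥ ψ = Complex.exp (-(2 * π * I * c / L)) • ψ := by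
    rw [Matrix.exp_mulVec_of_mulVec_eq_smul (by rw [Matrix.smul_mulVec, hQψ, smul_smul]),
      ← Complex.exp_eq_exp_ℂ]
    congr 2
    ring
  calc T *ᵥ (exp (I • twistGenerator q) *ᵥ ψ)
      = (T * exp (I • twistGenerator q) * Tᴴ) *ᵥ (T *ᵥ ψ) := by
        rw [Matrix.mulVec_mulVec, Matrix.mulVec_mulVec, mul_assoc _ Tᴴ, hT2, mul_one]
    _ = _ := by
        rw [conj_exp_I_smul_twistGenerator hT1 hT2 htrans hcomm hherm hint, hTψ,
          ← Matrix.mulVec_mulVec, Matrix.mulVec_smul, hQ, Matrix.mulVec_smul, Matrix.mulVec_smul,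
          smul_smul]

end Twist

theorem stmt_11_general {L n : ℕ} [NeZero L]
    (T : Matrix (Fin n) (Fin n) ℂ)
    (hT1 : T * Tᴴ = 1) (hT2 : Tᴴ * T = 1)
    (q : ZMod L → Matrix (Fin n) (Fin n) ℂ)
    (hherm : ∀ j, (q j).IsHermitian)
    (hcomm : ∀ j k, q j * q k = q k * q j)
    (hint : ∀ j, spectrum ℂ (q j) ⊆ Set.range ((↑) : ℤ → ℂ))
    (htrans : ∀ j, T * q j * Tᴴ = q (j + 1))
    (ψ₀ : Fin n → ℂ)
    (z : ℂ) (hz : ‖z‖ = 1) (hTψ : T.mulVec ψ₀ = z • ψ₀)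
    (qbar : ℝ) (hQψ : (∑ j, q j).mulVec ψ₀ = (qbar : ℂ) • ψ₀)
    (Φ : Fin n → ℂ)
    (hΦ : Φ = (NormedSpace.exp (Complex.I •
        ∑ j : Fin L, ((2 * Real.pi * (j : ℝ) / (L : ℝ) : ℝ) : ℂ) • q ((j : ℕ) : ZMod L))).mulVec
      ψ₀) :
    T.mulVec Φ =
        (z * Complex.exp (-(2 * (Real.pi : ℂ) * Complex.I * (qbar : ℂ) / (L : ℂ)))) • Φ ∧
      ((∀ m : ℤ, qbar / (L : ℝ) ≠ (m : ℝ)) → star ψ₀ ⬝ᵥ Φ = 0) := by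
  rw [sum_fin_smul_eq_twistGenerator] at hΦ
  subst hΦ
  have hTΦ := mulVec_exp_I_smul_twistGenerator hT1 hT2 htrans hcomm (hherm 0) (hint 0) hTψ hQψ
  refine ⟨hTΦ, fun hq => Matrix.dotProduct_eq_zero_of_mulVec_eq_smul hT2 hz hTψ hTΦ ?_⟩
  have he : Complex.exp (-(2 * π * I * qbar / L)) ≠ 1 := by
    exact_mod_cast Complex.exp_neg_two_pi_I_mul_div_ne_one hq
  have hz0 : z ≠ 0 := norm_ne_zero_iff.mp (hz ▸ one_ne_zero)
  exact fun h => he ((mul_eq_left₀ hz0).mp h)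

/-- The twisted variational state of the Lieb-Schultz-Mattis argument: with
`A = ∑_{j=0}^{L−1} 2π (j/L) q_j` and `Φ = e^{iA} ψ₀`, if `T ψ₀ = z ψ₀` and `Q ψ₀ = q̄ ψ₀`
then `T Φ = z e^{−2πi q̄/L} Φ`; in particular `⟨ψ₀, Φ⟩ = 0` when `q̄/L ∉ ℤ`. -/
theorem stmt_11 {L n : ℕ} [NeZero L] (hL : 2 ≤ L)
    (T : Matrix (Fin n) (Fin n) ℂ)
    (hT1 : T * Tᴴ = 1) (hT2 : Tᴴ * T = 1) (hTL : T ^ L = 1)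
    (q : ZMod L → Matrix (Fin n) (Fin n) ℂ)
    (hherm : ∀ j, (q j).IsHermitian)
    (hcomm : ∀ j k, q j * q k = q k * q j)
    (hint : ∀ j, spectrum ℂ (q j) ⊆ Set.range ((↑) : ℤ → ℂ))
    (htrans : ∀ j, T * q j * Tᴴ = q (j + 1))
    (ψ₀ : Fin n → ℂ) (hunit : star ψ₀ ⬝ᵥ ψ₀ = 1)
    (z : ℂ) (hz : ‖z‖ = 1) (hTψ : T.mulVec ψ₀ = z • ψ₀)
    (qbar : ℝ) (hQψ : (∑ j, q j).mulVec ψ₀ = (qbar : ℂ) • ψ₀)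
    (Φ : Fin n → ℂ)
    (hΦ : Φ = (NormedSpace.exp (Complex.I •
        ∑ j : Fin L, ((2 * Real.pi * (j : ℝ) / (L : ℝ) : ℝ) : ℂ) • q ((j : ℕ) : ZMod L))).mulVec
      ψ₀) :
    T.mulVec Φ =
        (z * Complex.exp (-(2 * (Real.pi : ℂ) * Complex.I * (qbar : ℂ) / (L : ℂ)))) • Φ ∧
      ((∀ m : ℤ, qbar / (L : ℝ) ≠ (m : ℝ)) → star ψ₀ ⬝ᵥ Φ = 0) :=
  stmt_11_general T hT1 hT2 q hherm hcomm hint htrans ψ₀ z hz hTψ qbar hQψ Φ hΦ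
end

section
/- Let A be a Hermitian n×n complex matrix and let h be any n×n complex matrix. Then ‖ (e^{iA} h e^{−iA} + e^{−iA} h e^{iA})/2 − h ‖ ≤ (1/2)·‖[[h, A], A]‖. -/
open Set

theorem norm_le_half_mul_sq_of_norm_deriv2_le
    {E : Type*} [NormedAddCommGroup E] [NormedSpace ℝ E] {f f' f'' : ℝ → E} {M x : ℝ}
    (hf : ∀ t, HasDerivAt f (f' t) t) (hf' : ∀ t, HasDerivAt f' (f'' t) t)
    (h₀ : f 0 = 0) (h₀' : f' 0 = 0) (hM : ∀ t ∈ Icc 0 x, ‖f'' t‖ ≤ M) (hx : 0 ≤ x) :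
    ‖f x‖ ≤ M / 2 * x ^ 2 := by
  have hf'_le : ∀ t ∈ Icc 0 x, ‖f' t‖ ≤ M * t :=
    image_norm_le_of_norm_deriv_right_le_deriv_boundary
      (fun t _ => (hf' t).continuousAt.continuousWithinAt) (fun t _ => (hf' t).hasDerivWithinAt)
      (by simp [h₀']) (fun t => by simpa using (hasDerivAt_id t).const_mul M)
      (fun t ht => hM t (Ico_subset_Icc_self ht))
  refine image_norm_le_of_norm_deriv_right_le_deriv_boundary (B := fun t => M / 2 * t ^ 2)
    (fun t _ => (hf t).continuousAt.continuousWithinAt) (fun t _ => (hf t).hasDerivWithinAt)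
    (by simp [h₀]) (fun t => ?_) (fun t ht => hf'_le t (Ico_subset_Icc_self ht)) ⟨hx, le_rfl⟩
  exact ((hasDerivAt_pow 2 t).const_mul (M / 2)).congr_deriv (by push_cast; ring)

section ExpConj

variable {𝔸 : Type*} [NormedRing 𝔸] [NormedAlgebra ℝ 𝔸]

noncomputable def expConj (c x : 𝔸) (t : ℝ) : 𝔸 :=
  NormedSpace.exp (t • c) * x * NormedSpace.exp (t • -c)

theorem hasDerivAt_expConj [CompleteSpace 𝔸] (c x : 𝔸) (t : ℝ) :
    HasDerivAt (expConj c x) (expConj c ⁅c, x⁆ t) t := by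
  refine (((hasDerivAt_exp_smul_const c t).mul_const x).mul
    (hasDerivAt_exp_smul_const' (-c) t)).congr_deriv ?_
  simp only [expConj, Ring.lie_def]
  noncomm_ring

theorem norm_expConj_le {c : 𝔸} (hc : ∀ t : ℝ, ‖NormedSpace.exp (t • c)‖ ≤ 1) (x : 𝔸) (t : ℝ) :
    ‖expConj c x t‖ ≤ ‖x‖ := by
  have hc' : ‖NormedSpace.exp (t • -c)‖ ≤ 1 := by
    simpa only [smul_neg, ← neg_smul] using hc (-t)
  calc ‖expConj c x t‖
      ≤ ‖NormedSpace.exp (t • c)‖ * ‖x‖ * ‖NormedSpace.exp (t • -c)‖ := norm_mul₃_le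
    _ ≤ 1 * ‖x‖ * 1 := by gcongr ?_ * _ * ?_; exact hc t
    _ = ‖x‖ := by ring

theorem norm_expConj_add_expConj_neg_sub_le [CompleteSpace 𝔸] {c : 𝔸}
    (hc : ∀ t : ℝ, ‖NormedSpace.exp (t • c)‖ ≤ 1) (x : 𝔸) :
    ‖expConj c x 1 + expConj c x (-1) - 2 • x‖ ≤ ‖⁅c, ⁅c, x⁆⁆‖ := by
  have hderiv : ∀ (y : 𝔸) (t : ℝ),
      HasDerivAt (fun s => expConj c y (-s)) (-expConj c ⁅c, y⁆ (-t)) t := fun y t => by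
    simpa [Function.comp_def] using (hasDerivAt_expConj c y (-t)).scomp t (hasDerivAt_neg t)
  have := norm_le_half_mul_sq_of_norm_deriv2_le (x := 1) (M := 2 * ‖⁅c, ⁅c, x⁆⁆‖)
    (f := fun t => expConj c x t + expConj c x (-t) - 2 • x)
    (f' := fun t => expConj c ⁅c, x⁆ t - expConj c ⁅c, x⁆ (-t))
    (fun t => (((hasDerivAt_expConj c x t).add (hderiv x t)).sub_const _).congr_deriv
      (sub_eq_add_neg _ _).symm)
    (fun t => (hasDerivAt_expConj c _ t).sub (hderiv _ t))
    (by simp [expConj, two_smul]) (by simp)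
    (fun t _ => (norm_sub_le _ _).trans (by
      rw [norm_neg, two_mul]; exact add_le_add (norm_expConj_le hc _ t) (norm_expConj_le hc _ _)))
    zero_le_one
  simpa using this

end ExpConj

section CStar

variable {𝔸 : Type*} [NormedRing 𝔸] [StarRing 𝔸] [CStarRing 𝔸] [CompleteSpace 𝔸]
  [NormedAlgebra ℂ 𝔸] [StarModule ℂ 𝔸]

theorem IsSelfAdjoint.norm_exp_smul_I_smul_le_one {a : 𝔸} (ha : IsSelfAdjoint a) (t : ℝ) :
    ‖NormedSpace.exp (t • Complex.I • a)‖ ≤ 1 := by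
  rcases subsingleton_or_nontrivial 𝔸 with _ | _
  · simp [Subsingleton.elim (NormedSpace.exp (t • Complex.I • a)) 0]
  · have hu := (selfAdjoint.expUnitary ⟨t • a, (IsSelfAdjoint.all t).smul ha⟩).prop
    rw [selfAdjoint.expUnitary_coe, smul_comm] at hu
    exact (CStarRing.norm_of_mem_unitary hu).le

theorem IsSelfAdjoint.norm_half_smul_exp_conj_add_sub_le {a : 𝔸} (ha : IsSelfAdjoint a) (b : 𝔸) :
    ‖(2 : ℂ)⁻¹ • (NormedSpace.exp (Complex.I • a) * b * NormedSpace.exp (-(Complex.I • a)) +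
        NormedSpace.exp (-(Complex.I • a)) * b * NormedSpace.exp (Complex.I • a)) - b‖ ≤
      (1 / 2) * ‖⁅⁅b, a⁆, a⁆‖ := by
  set c : 𝔸 := Complex.I • a with hc
  have hsum : expConj c b 1 + expConj c b (-1) =
      NormedSpace.exp c * b * NormedSpace.exp (-c) +
        NormedSpace.exp (-c) * b * NormedSpace.exp c := by
    simp [expConj]
  have hlie : ⁅c, ⁅c, b⁆⁆ = -⁅⁅b, a⁆, a⁆ := by
    simp only [hc, Ring.lie_def, smul_mul_assoc, mul_smul_comm, ← smul_sub, smul_smul,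
      Complex.I_mul_I, neg_one_smul]
    noncomm_ring
  have key := norm_expConj_add_expConj_neg_sub_le ha.norm_exp_smul_I_smul_le_one b
  rw [hsum, hlie, norm_neg] at key
  calc _ = ‖(2 : ℂ)⁻¹ • (NormedSpace.exp c * b * NormedSpace.exp (-c) +
          NormedSpace.exp (-c) * b * NormedSpace.exp c - 2 • b)‖ := by
        rw [two_nsmul, ← two_smul ℂ, smul_sub, smul_smul, inv_mul_cancel₀ two_ne_zero, one_smul]
    _ ≤ 1 / 2 * ‖⁅⁅b, a⁆, a⁆‖ := by
        rw [norm_smul, norm_inv, Complex.norm_two, one_div]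
        gcongr

end CStar

/-- The sign-averaged conjugation estimate: for Hermitian `A`,
`‖(e^{iA} h e^{−iA} + e^{−iA} h e^{iA})/2 − h‖ ≤ (1/2) ‖[[h,A],A]‖`. -/
theorem stmt_12 {n : ℕ} (A h : Matrix (Fin n) (Fin n) ℂ) (hA : A.IsHermitian) :
    opNorm
        ((2 : ℂ)⁻¹ •
            (NormedSpace.exp (Complex.I • A) * h * NormedSpace.exp (-(Complex.I • A)) +
              NormedSpace.exp (-(Complex.I • A)) * h * NormedSpace.exp (Complex.I • A)) -
          h) ≤
      (1 / 2) * opNorm ((h * A - A * h) * A - A * (h * A - A * h)) := by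
  -- Under the L2 operator norm instances `opNorm` is the norm, the topology is still the product
  -- topology (so `exp` is unchanged) and `⁅x, y⁆` unfolds to `x * y - y * x`, all definitionally.
  open scoped Matrix.Norms.L2Operator in
  exact IsSelfAdjoint.norm_half_smul_exp_conj_add_sub_le hA h
end
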